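/- For ω > 0 and c > 3/ω, with h_n = c·ln n/n, one has lim_{n→∞} n² ∫₀^{h_n} t (1 − ω t)^{n−2} dt = 1/ω². -/

import Mathlib

/-!
The integrand has the elementary antiderivative
`((1 - ω t)^n / n - (1 - ω t)^(n-1) / (n-1)) / ω²`. Writing `x = 1 - ω h_n` this gives
`n² ∫₀^{h_n} t (1 - ω t)^(n-2) dt = (n/(n-1) + x · n x^(n-1) - n/(n-1) · n x^(n-1)) / ω²`,
and `n x^(n-1) ≤ e^{ωc} n^(1-ωc) → 0` because `x ≤ exp (-ω h_n)` and `ωc > 1`.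
-/

open MeasureTheory Filter Real Topology

theorem integral_mul_one_sub_mul_pow_sub_two {ω : ℝ} (hω : ω ≠ 0) (b : ℝ) {n : ℕ} (hn : 2 ≤ n) :
    ∫ t in (0:ℝ)..b, t * (1 - ω * t) ^ (n - 2) =
      (1 / (((n:ℝ) - 1) * n) + (1 - ω * b) ^ n / n - (1 - ω * b) ^ (n - 1) / ((n:ℝ) - 1)) /
        ω ^ 2 := by
  obtain ⟨m, rfl⟩ := Nat.exists_eq_add_of_le' hn
  have hderiv : ∀ t, HasDerivAt
      (fun t => ((1 - ω * t) ^ (m + 2) / ((m:ℝ) + 2) - (1 - ω * t) ^ (m + 1) / ((m:ℝ) + 1)) / ω ^ 2)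
      (t * (1 - ω * t) ^ m) t := by
    intro t
    have hlin : HasDerivAt (fun t : ℝ => 1 - ω * t) (-ω) t := by
      simpa using ((hasDerivAt_id t).const_mul ω).const_sub 1
    refine ((((hlin.fun_pow (m + 2)).div_const ((m:ℝ) + 2)).fun_sub
      ((hlin.fun_pow (m + 1)).div_const ((m:ℝ) + 1))).div_const (ω ^ 2)).congr_deriv ?_
    push_cast
    field_simp
    ring
  rw [Nat.add_sub_cancel, intervalIntegral.integral_eq_sub_of_hasDerivAt (fun t _ => hderiv t)
    (by apply Continuous.intervalIntegrable; fun_prop), show m + 2 - 1 = m + 1 from rfl]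
  push_cast
  simp only [show (m:ℝ) + 2 - 1 = m + 1 by ring, mul_zero, sub_zero, one_pow]
  field_simp
  ring

theorem tendsto_mul_log_div_natCast (a : ℝ) :
    Tendsto (fun n : ℕ => a * log n / n) atTop (𝓝 0) := by
  simpa [mul_div_assoc] using
    ((isLittleO_log_id_atTop.tendsto_div_nhds_zero).comp tendsto_natCast_atTop_atTop).const_mul a

theorem one_sub_mul_log_div_pow_pred_le {a : ℝ} (ha : 0 ≤ a) {n : ℕ} (hn : 0 < n)
    (hx : 0 ≤ 1 - a * log n / n) :
    (1 - a * log n / n) ^ (n - 1) ≤ exp a * (n:ℝ) ^ (-a) := by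
  have hn' : (0:ℝ) < n := by exact_mod_cast hn
  set y := a * log n / n
  have hy : y ≤ a := by
    calc y = a * (log n / n) := mul_div_assoc _ _ _
      _ ≤ a * 1 := by gcongr; exact div_le_one_of_le₀ (log_le_self hn'.le) hn'.le
      _ = a := mul_one a
  calc (1 - y) ^ (n - 1) ≤ exp (-y) ^ (n - 1) :=
        pow_le_pow_left₀ hx (by linarith [add_one_le_exp (-y)]) _
    _ = exp y * exp (-(a * log n)) := by
        rw [← exp_nat_mul, ← exp_add]
        congr 1
        simp only [y]
        push_cast [Nat.cast_sub hn]
        field_simp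
        ring
    _ = exp y * (n:ℝ) ^ (-a) := by rw [rpow_def_of_pos hn']; ring_nf
    _ ≤ exp a * (n:ℝ) ^ (-a) := by gcongr

theorem tendsto_mul_one_sub_mul_log_div_pow_pred {a : ℝ} (ha : 1 < a) :
    Tendsto (fun n : ℕ => (n:ℝ) * (1 - a * log n / n) ^ (n - 1)) atTop (𝓝 0) := by
  have hbound : Tendsto (fun n : ℕ => exp a * (n:ℝ) ^ (1 - a)) atTop (𝓝 0) := by
    simpa using ((tendsto_rpow_neg_atTop (by linarith : 0 < a - 1)).comp
      tendsto_natCast_atTop_atTop).const_mul (exp a)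
  have hx : ∀ᶠ n : ℕ in atTop, 0 ≤ 1 - a * log n / n := by
    filter_upwards [(tendsto_mul_log_div_natCast a).eventually_le_const one_pos] with n hn
    linarith
  refine squeeze_zero' ?_ ?_ hbound
  · filter_upwards [hx] with n hn
    positivity
  · filter_upwards [hx, eventually_gt_atTop 0] with n hxn hn
    have hn' : (0:ℝ) < n := by exact_mod_cast hn
    calc (n:ℝ) * (1 - a * log n / n) ^ (n - 1) ≤ n * (exp a * (n:ℝ) ^ (-a)) := by
          gcongr; exact one_sub_mul_log_div_pow_pred_le (by linarith) hn hxn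
      _ = exp a * (n:ℝ) ^ (1 - a) := by
          rw [sub_eq_add_neg, rpow_add hn', rpow_one]; ring

theorem stmt15 (ω c : ℝ) (hω : 0 < ω) (hc : 3 / ω < c) :
    Tendsto (fun n : ℕ => (n:ℝ)^2 *
        ∫ t in (0:ℝ)..(c * Real.log n / n), t * (1 - ω * t)^(n-2))
      atTop (nhds (1 / ω^2)) := by
  have hωc : 1 < ω * c := by rw [div_lt_iff₀ hω] at hc; linarith
  set x : ℕ → ℝ := fun n => 1 - ω * c * log n / n
  have hx : Tendsto x atTop (𝓝 1) := by
    simpa using (tendsto_mul_log_div_natCast (ω * c)).const_sub 1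
  have hu : Tendsto (fun n : ℕ => (n:ℝ) * x n ^ (n - 1)) atTop (𝓝 0) :=
    tendsto_mul_one_sub_mul_log_div_pow_pred hωc
  have hr : Tendsto (fun n : ℕ => (n:ℝ) / (n - 1)) atTop (𝓝 1) := by
    simpa [sub_eq_add_neg] using tendsto_natCast_div_add_atTop (-1:ℝ)
  have hlim := ((hr.add (hx.mul hu)).sub (hr.mul hu)).div_const (ω ^ 2)
  rw [show (1:ℝ) + 1 * 0 - 1 * 0 = 1 by ring] at hlim
  refine hlim.congr' ?_
  filter_upwards [eventually_ge_atTop 2] with n hn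
  obtain ⟨k, rfl⟩ := Nat.exists_eq_add_of_le' (by omega : 1 ≤ n)
  rw [integral_mul_one_sub_mul_pow_sub_two hω.ne' _ hn]
  have hk : (k:ℝ) ≠ 0 := by norm_cast; omega
  simp only [x, Nat.add_sub_cancel, Nat.cast_add, Nat.cast_one, add_sub_cancel_right, pow_succ]
  field_simp
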